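/- Let B be a 3×3 real skew-symmetrizable matrix that is cyclic. Then B is cluster-cyclic (i.e., every matrix obtained from B by any finite sequence of matrix mutations is cyclic) if and only if |b_{ij} b_{ji}| ≥ 4 for all i ≠ j and |b_{12}b_{21}| + |b_{23}b_{32}| + |b_{31}b_{13}| − |b_{12}b_{23}b_{31}| ≤ 4. -/

import Mathlib

open Matrix

noncomputable section

abbrev Mat3 := Matrix (Fin 3) (Fin 3) ℝ

def pPart {n : ℕ} (A : Matrix (Fin n) (Fin n) ℝ) : Matrix (Fin n) (Fin n) ℝ :=
  Matrix.of fun i j => max (A i j) 0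

def Jmat {n : ℕ} (k : Fin n) : Matrix (Fin n) (Fin n) ℝ :=
  Matrix.diagonal fun i => if i = k then -1 else 1

/-- `A^{•k}`: keep only column `k`. -/
def colSel {n : ℕ} (k : Fin n) (A : Matrix (Fin n) (Fin n) ℝ) : Matrix (Fin n) (Fin n) ℝ :=
  Matrix.of fun i j => if j = k then A i j else 0

/-- `A^{k•}`: keep only row `k`. -/
def rowSel {n : ℕ} (k : Fin n) (A : Matrix (Fin n) (Fin n) ℝ) : Matrix (Fin n) (Fin n) ℝ :=
  Matrix.of fun i j => if i = k then A i j else 0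

/-- Matrix mutation in direction `k`. -/
def mutB {n : ℕ} (k : Fin n) (B : Matrix (Fin n) (Fin n) ℝ) : Matrix (Fin n) (Fin n) ℝ :=
  (Jmat k + colSel k (pPart (-B))) * B * (Jmat k + rowSel k (pPart B))

/-- One step of the simultaneous `(B, C, G)` recursion, mutating at direction `k`. -/
def CGstep {n : ℕ} (B0 : Matrix (Fin n) (Fin n) ℝ)
    (p : Matrix (Fin n) (Fin n) ℝ × Matrix (Fin n) (Fin n) ℝ × Matrix (Fin n) (Fin n) ℝ)
    (k : Fin n) :
    Matrix (Fin n) (Fin n) ℝ × Matrix (Fin n) (Fin n) ℝ × Matrix (Fin n) (Fin n) ℝ :=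
  (mutB k p.1,
   p.2.1 * Jmat k + p.2.1 * rowSel k (pPart p.1) + colSel k (pPart (-p.2.1)) * p.1,
   p.2.2 * Jmat k + p.2.2 * colSel k (pPart (-p.1)) - B0 * colSel k (pPart (-p.2.1)))

def CGmat {n : ℕ} (B : Matrix (Fin n) (Fin n) ℝ) (w : List (Fin n)) :
    Matrix (Fin n) (Fin n) ℝ × Matrix (Fin n) (Fin n) ℝ × Matrix (Fin n) (Fin n) ℝ :=
  w.foldl (CGstep B) (B, 1, 1)

/-- The exchange matrix `B^w`. -/
def Bmat {n : ℕ} (B : Matrix (Fin n) (Fin n) ℝ) (w : List (Fin n)) : Matrix (Fin n) (Fin n) ℝ :=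
  (CGmat B w).1

/-- The `C`-matrix `C^w`. -/
def Cmat {n : ℕ} (B : Matrix (Fin n) (Fin n) ℝ) (w : List (Fin n)) : Matrix (Fin n) (Fin n) ℝ :=
  (CGmat B w).2.1

/-- The `G`-matrix `G^w`. -/
def Gmat {n : ℕ} (B : Matrix (Fin n) (Fin n) ℝ) (w : List (Fin n)) : Matrix (Fin n) (Fin n) ℝ :=
  (CGmat B w).2.2

/-- A sequence is reduced if consecutive entries differ. -/
def ReducedSeq {n : ℕ} (w : List (Fin n)) : Prop := w.Chain' (· ≠ ·)

def SkewSymmetrizable {n : ℕ} (B : Matrix (Fin n) (Fin n) ℝ) : Prop :=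
  ∃ d : Fin n → ℝ, (∀ i, 0 < d i) ∧ (Matrix.diagonal d * B)ᵀ = -(Matrix.diagonal d * B)

def cyclicPattern : Mat3 := !![0,-1,1; 1,0,-1; -1,1,0]

/-- A rank-3 exchange matrix is cyclic if its sign pattern is `± cyclicPattern`. -/
def IsCyclic3 (B : Mat3) : Prop :=
  (∀ i j, Real.sign (B i j) = cyclicPattern i j) ∨
  (∀ i j, Real.sign (B i j) = - cyclicPattern i j)

/-- `B` is cluster-cyclic if every iterated mutation along a reduced sequence is cyclic. -/
def ClusterCyclic (B : Mat3) : Prop :=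
  ∀ w : List (Fin 3), ReducedSeq w → IsCyclic3 (Bmat B w)

/-- `ε` is a family of tropical signs for the (sign-coherent) `C`-pattern of `B`. -/
def IsTropSigns (B : Mat3) (ε : List (Fin 3) → Fin 3 → ℝ) : Prop :=
  ∀ w : List (Fin 3), ReducedSeq w → ∀ i : Fin 3,
    (ε w i = 1 ∨ ε w i = -1) ∧ ∀ j, 0 ≤ ε w i * Cmat B w j i


/-!
Write `p k = √|b (k+1) (k+2) * b (k+2) (k+1)|` (indices mod 3) for the weight of the edge of the
quiver opposite to `k`. For a cyclic skew-symmetrizable `B`, the mutation `μ_k B` is cyclic exactly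
when `p (k+1) * p (k+2) - p k > 0`, and then it only replaces `p k` by this number (a Vieta jump),
which preserves `p 0 ^ 2 + p 1 ^ 2 + p 2 ^ 2 - p 0 * p 1 * p 2`. The conditions of the theorem say
that all `p i ≥ 2` and that this invariant is at most `4`; then every Vieta jump again gives a
weight `≥ 2`, so all mutations stay cyclic. Conversely, if some `p i < 2`, or all `p i ≥ 2` but the
invariant exceeds `4`, repeatedly mutating at a vertex of maximal weight keeps the sequence reduced
and lowers the sum of the weights by a fixed amount at each step, so it must leave the cyclic
matrices.
-/

theorem Real.sign_eq_one_iff {r : ℝ} : Real.sign r = 1 ↔ 0 < r := by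
  rcases lt_trichotomy r 0 with h | rfl | h
  · simp only [Real.sign_of_neg h, h.not_gt, iff_false]; norm_num
  · simp [Real.sign_zero]
  · simp [Real.sign_of_pos h, h]

theorem Real.sign_eq_neg_one_iff {r : ℝ} : Real.sign r = -1 ↔ r < 0 := by
  rw [← neg_inj, ← Real.sign_neg, neg_neg, Real.sign_eq_one_iff, neg_pos]

theorem max_neg_zero_mul_add_mul_max_zero (a b : ℝ) :
    max (-a) 0 * b + a * max b 0 = (|a| * b + a * |b|) / 2 := by
  rcases le_total a 0 with ha | ha <;> rcases le_total b 0 with hb | hb <;>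
    simp only [abs_of_nonpos, abs_of_nonneg, max_eq_left, max_eq_right, ha, hb, neg_nonneg,
      neg_nonpos] <;> ring

section Mutation

variable {n : ℕ} {B : Matrix (Fin n) (Fin n) ℝ} {k : Fin n}

theorem mutB_apply (hkk : B k k = 0) (i j : Fin n) :
    mutB k B i j = (if i = k then -1 else 1) * (if j = k then -1 else 1) * B i j
      + (if j = k then -1 else 1) * (max (-B i k) 0 * B k j)
      + (if i = k then -1 else 1) * (B i k * max (B k j) 0) := by
  simp only [mutB, Matrix.mul_apply, Matrix.add_apply, Jmat, colSel, rowSel, pPart,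
    Matrix.diagonal_apply, Matrix.of_apply, Matrix.neg_apply]
  simp only [add_mul, ite_mul, neg_mul, one_mul, zero_mul, Finset.sum_add_distrib,
    Finset.sum_ite_eq, Finset.mem_univ, ↓reduceIte, Finset.sum_ite_eq', mul_add, mul_ite, mul_neg,
    mul_one, mul_zero, hkk, add_zero]
  split_ifs <;> ring

theorem mutB_apply_left (hkk : B k k = 0) (j : Fin n) : mutB k B k j = -B k j := by
  by_cases hj : j = k <;> simp [mutB_apply hkk, hj, hkk]

theorem mutB_apply_right (hkk : B k k = 0) (i : Fin n) : mutB k B i k = -B i k := by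
  by_cases hi : i = k <;> simp [mutB_apply hkk, hi, hkk]

theorem mutB_apply_of_ne (hkk : B k k = 0) {i j : Fin n} (hi : i ≠ k) (hj : j ≠ k) :
    mutB k B i j = B i j + (|B i k| * B k j + B i k * |B k j|) / 2 := by
  simp [mutB_apply hkk, hi, hj, ← max_neg_zero_mul_add_mul_max_zero, add_assoc]

theorem mutB_neg (hkk : B k k = 0) : mutB k (-B) = -mutB k B := by
  ext i j
  by_cases hi : i = k
  · subst hi; simp [mutB_apply_left, hkk]
  by_cases hj : j = k
  · subst hj; simp [mutB_apply_right, hkk]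
  simp only [Matrix.neg_apply, mutB_apply_of_ne, hkk, neg_zero, hi, hj, abs_neg, ne_eq,
    not_false_eq_true]
  ring

theorem skewSymmetrizable_iff :
    SkewSymmetrizable B ↔
      ∃ d : Fin n → ℝ, (∀ i, 0 < d i) ∧ ∀ i j, d i * B i j = -(d j * B j i) := by
  refine exists_congr fun d => and_congr_right fun _ => ?_
  simp only [← Matrix.ext_iff, Matrix.transpose_apply, Matrix.neg_apply, Matrix.diagonal_mul]
  exact ⟨fun h i j => by linarith [h j i], fun h i j => by linarith [h j i]⟩

namespace SkewSymmetrizable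

variable (hS : SkewSymmetrizable B)
include hS

theorem apply_self_eq_zero (i : Fin n) : B i i = 0 := by
  obtain ⟨d, hd, h⟩ := skewSymmetrizable_iff.1 hS
  have := h i i
  exact (mul_eq_zero.1 (by linarith : d i * B i i = 0)).resolve_left (hd i).ne'

theorem neg : SkewSymmetrizable (-B) := by
  obtain ⟨d, hd, h⟩ := skewSymmetrizable_iff.1 hS
  exact skewSymmetrizable_iff.2 ⟨d, hd, fun i j => by simp [h i j]⟩

theorem mutB (k : Fin n) : SkewSymmetrizable (mutB k B) := by
  obtain ⟨d, hd, h⟩ := skewSymmetrizable_iff.1 hS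
  have hkk := hS.apply_self_eq_zero k
  have habs : ∀ i j, d i * |B i j| = d j * |B j i| := fun i j => by
    simpa [abs_mul, abs_of_pos (hd i), abs_of_pos (hd j)] using congrArg abs (h i j)
  refine skewSymmetrizable_iff.2 ⟨d, hd, fun i j => ?_⟩
  by_cases hi : i = k
  · subst hi; by_cases hj : j = i
    · subst hj; simp [mutB_apply_left hkk, hkk]
    simp [mutB_apply_left hkk, mutB_apply_right hkk, h i j]
  by_cases hj : j = k
  · subst hj; simp [mutB_apply_left hkk, mutB_apply_right hkk, h i j]
  rw [mutB_apply_of_ne hkk hi hj, mutB_apply_of_ne hkk hj hi]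
  linear_combination h i j + (|B k j| / 2) * h i k + (B k j / 2) * habs i k
    + (|B k i| / 2) * h j k + (B k i / 2) * habs j k

theorem mul_mul_swap (i j l : Fin n) : B j i * B l j * B i l = -(B i j * B j l * B l i) := by
  obtain ⟨d, hd, h⟩ := skewSymmetrizable_iff.1 hS
  have hd3 : d i * d j * d l ≠ 0 := by have := hd i; have := hd j; have := hd l; positivity
  apply mul_left_cancel₀ hd3
  linear_combination (d l * B l j * d i * B i l) * h i j + (d i * B i j * d l * B l i) * h j l
    - (d i * B i j * d l * B l j) * h l i

end SkewSymmetrizable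

end Mutation

namespace Fin3

theorem eq_or_eq_add_one_or_eq_add_two (i k : Fin 3) : i = k ∨ i = k + 1 ∨ i = k + 2 := by
  revert i k; decide

theorem sum_eq (p : Fin 3 → ℝ) (k : Fin 3) : ∑ i, p i = p k + p (k + 1) + p (k + 2) := by
  rw [Fin.sum_univ_three]
  fin_cases k <;> simp only [Fin.zero_eta, Fin.mk_one, Fin.reduceFinMk, Fin.reduceAdd, zero_add]
    <;> ring

variable (k : Fin 3)

@[simp] theorem add_one_add_one : k + 1 + 1 = k + 2 := by revert k; decide
@[simp] theorem add_one_add_two : k + 1 + 2 = k := by revert k; decide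
@[simp] theorem add_two_add_one : k + 2 + 1 = k := by revert k; decide
@[simp] theorem add_two_add_two : k + 2 + 2 = k + 1 := by revert k; decide
@[simp] theorem add_one_ne_self : k + 1 ≠ k := by revert k; decide
@[simp] theorem add_two_ne_self : k + 2 ≠ k := by revert k; decide
@[simp] theorem add_one_ne_add_two : k + 1 ≠ k + 2 := by revert k; decide

end Fin3

def weight (B : Mat3) (k : Fin 3) : ℝ := √|B (k + 1) (k + 2) * B (k + 2) (k + 1)|

def markov (p : Fin 3 → ℝ) : ℝ := p 0 ^ 2 + p 1 ^ 2 + p 2 ^ 2 - p 0 * p 1 * p 2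

theorem markov_eq (p : Fin 3 → ℝ) (k : Fin 3) :
    markov p = p k ^ 2 + p (k + 1) ^ 2 + p (k + 2) ^ 2 - p k * p (k + 1) * p (k + 2) := by
  unfold markov
  fin_cases k <;> simp only [Fin.zero_eta, Fin.mk_one, Fin.reduceFinMk, Fin.reduceAdd, zero_add]
    <;> ring

section Weight

variable {B : Mat3}

theorem weight_nonneg (k : Fin 3) : 0 ≤ weight B k := Real.sqrt_nonneg _

theorem sq_weight (k : Fin 3) : weight B k ^ 2 = |B (k + 1) (k + 2) * B (k + 2) (k + 1)| :=
  Real.sq_sqrt (abs_nonneg _)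

theorem weight_neg (k : Fin 3) : weight (-B) k = weight B k := by
  simp [weight]

theorem weight_mutB_of_ne {k : Fin 3} (hkk : B k k = 0) {i : Fin 3} (hi : i ≠ k) :
    weight (mutB k B) i = weight B i := by
  rcases Fin3.eq_or_eq_add_one_or_eq_add_two k i with rfl | rfl | rfl
  · exact absurd rfl hi
  all_goals simp [weight, mutB_apply_left hkk, mutB_apply_right hkk]

theorem four_le_abs_mul_iff_two_le_weight :
    (∀ i j, i ≠ j → 4 ≤ |B i j * B j i|) ↔ ∀ k, 2 ≤ weight B k := by
  have key (k : Fin 3) : 4 ≤ |B (k + 1) (k + 2) * B (k + 2) (k + 1)| ↔ 2 ≤ weight B k := by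
    rw [← sq_weight, show (4 : ℝ) = 2 ^ 2 by norm_num,
      pow_le_pow_iff_left₀ zero_le_two (weight_nonneg k) two_ne_zero]
  refine ⟨fun h k => (key k).1 (h _ _ (Fin3.add_one_ne_add_two k)), fun h => ?_⟩
  intro i j hij
  rcases Fin3.eq_or_eq_add_one_or_eq_add_two j i with rfl | rfl | rfl
  · exact absurd rfl hij
  · simpa using (key (i + 2)).2 (h _)
  · simpa [mul_comm] using (key (i + 1)).2 (h _)

theorem SkewSymmetrizable.weight_mul (hS : SkewSymmetrizable B) (k : Fin 3) :
    weight B k * weight B (k + 1) * weight B (k + 2) =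
      |B (k + 1) (k + 2) * B (k + 2) k * B k (k + 1)| := by
  rw [← pow_left_inj₀ (by simp only [weight_nonneg, mul_nonneg]) (abs_nonneg _) two_ne_zero,
    mul_pow, mul_pow, sq_weight, sq_weight, sq_weight, sq_abs]
  simp only [Fin3.add_one_add_one, Fin3.add_one_add_two, Fin3.add_two_add_one,
    Fin3.add_two_add_two, ← abs_mul]
  set t := B (k + 1) (k + 2) * B (k + 2) k * B k (k + 1)
  rw [show B (k + 1) (k + 2) * B (k + 2) (k + 1) * (B (k + 2) k * B k (k + 2)) *
      (B k (k + 1) * B (k + 1) k) = -t ^ 2 by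
    linear_combination t * hS.mul_mul_swap (k + 1) (k + 2) k,
    abs_neg, abs_of_nonneg (sq_nonneg _)]

theorem SkewSymmetrizable.markov_weight (hS : SkewSymmetrizable B) :
    markov (weight B) =
      |B 0 1 * B 1 0| + |B 1 2 * B 2 1| + |B 2 0 * B 0 2| - |B 0 1 * B 1 2 * B 2 0| := by
  have h : weight B 0 * weight B 1 * weight B 2 = |B 0 1 * B 1 2 * B 2 0| := by
    rw [mul_rotate (B 0 1)]
    exact hS.weight_mul 0
  rw [markov, h, show weight B 0 ^ 2 = |B 1 2 * B 2 1| from sq_weight 0,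
    show weight B 1 ^ 2 = |B 2 0 * B 0 2| from sq_weight 1,
    show weight B 2 ^ 2 = |B 0 1 * B 1 0| from sq_weight 2]
  ring

theorem cyclicPattern_self (i : Fin 3) : cyclicPattern i i = 0 := by
  fin_cases i <;> simp [cyclicPattern]

theorem cyclicPattern_add_one (i : Fin 3) : cyclicPattern i (i + 1) = -1 := by
  fin_cases i <;> simp [cyclicPattern]

theorem cyclicPattern_add_two (i : Fin 3) : cyclicPattern i (i + 2) = 1 := by
  fin_cases i <;> simp [cyclicPattern]

def IsPosCyclic (B : Mat3) : Prop :=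
  ∀ i : Fin 3, B i i = 0 ∧ B i (i + 1) < 0 ∧ 0 < B (i + 1) i

section Cyclic

variable {B : Mat3}

theorem sign_eq_cyclicPattern_iff :
    (∀ i j, Real.sign (B i j) = cyclicPattern i j) ↔ IsPosCyclic B := by
  constructor
  · intro h i
    have h0 := h i i
    have h1 := h i (i + 1)
    have h2 := h (i + 1) (i + 1 + 2)
    rw [cyclicPattern_self, Real.sign_eq_zero_iff] at h0
    rw [cyclicPattern_add_one, Real.sign_eq_neg_one_iff] at h1
    rw [cyclicPattern_add_two, Real.sign_eq_one_iff, Fin3.add_one_add_two] at h2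
    exact ⟨h0, h1, h2⟩
  · intro h i j
    rcases Fin3.eq_or_eq_add_one_or_eq_add_two j i with rfl | rfl | rfl
    · rw [cyclicPattern_self, (h j).1, Real.sign_zero]
    · rw [cyclicPattern_add_one, Real.sign_eq_neg_one_iff]
      exact (h i).2.1
    · rw [cyclicPattern_add_two, Real.sign_eq_one_iff]
      simpa using (h (i + 2)).2.2

theorem isCyclic3_iff : IsCyclic3 B ↔ IsPosCyclic B ∨ IsPosCyclic (-B) := by
  simp only [IsCyclic3, ← sign_eq_cyclicPattern_iff, Matrix.neg_apply, Real.sign_neg,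
    neg_eq_iff_eq_neg]

theorem isCyclic3_neg_iff : IsCyclic3 (-B) ↔ IsCyclic3 B := by
  rw [isCyclic3_iff, isCyclic3_iff, neg_neg, or_comm]

namespace IsPosCyclic

variable (hB : IsPosCyclic B)
include hB

theorem sq_weight_eq (k : Fin 3) : weight B k ^ 2 = -(B (k + 1) (k + 2) * B (k + 2) (k + 1)) := by
  have h := hB (k + 1)
  rw [Fin3.add_one_add_one] at h
  rw [sq_weight, abs_of_neg (mul_neg_of_neg_of_pos h.2.1 h.2.2)]

theorem weight_pos (k : Fin 3) : 0 < weight B k := by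
  have h := hB (k + 1)
  rw [Fin3.add_one_add_one] at h
  exact Real.sqrt_pos.2 (abs_pos.2 (mul_ne_zero h.2.1.ne h.2.2.ne'))

theorem mutB_apply_add_one_add_two (k : Fin 3) :
    mutB k B (k + 1) (k + 2) = B (k + 1) (k + 2) + B (k + 1) k * B k (k + 2) := by
  have h := (hB (k + 2)).2.2
  rw [Fin3.add_two_add_one] at h
  rw [mutB_apply_of_ne (hB k).1 (Fin3.add_one_ne_self k) (Fin3.add_two_ne_self k),
    abs_of_pos (hB k).2.2, abs_of_pos h]
  ring

theorem mutB_apply_add_two_add_one (k : Fin 3) :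
    mutB k B (k + 2) (k + 1) = B (k + 2) (k + 1) - B (k + 2) k * B k (k + 1) := by
  have h := (hB (k + 2)).2.1
  rw [Fin3.add_two_add_one] at h
  rw [mutB_apply_of_ne (hB k).1 (Fin3.add_two_ne_self k) (Fin3.add_one_ne_self k),
    abs_of_neg (hB k).2.1, abs_of_neg h]
  ring

variable (hS : SkewSymmetrizable B) (k : Fin 3)
include hS

theorem weight_mul :
    weight B k * weight B (k + 1) * weight B (k + 2) =
      -(B (k + 1) (k + 2) * B (k + 2) k * B k (k + 1)) := by
  have h1 := (hB (k + 1)).2.1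
  have h2 := (hB (k + 2)).2.1
  simp only [Fin3.add_one_add_one, Fin3.add_two_add_one] at h1 h2
  rw [hS.weight_mul, abs_of_neg]
  exact mul_neg_of_pos_of_neg (mul_pos_of_neg_of_neg h1 h2) (hB k).2.1

theorem mutB_mul_apply :
    mutB k B (k + 1) (k + 2) * B (k + 2) (k + 1) =
      weight B k * (weight B (k + 1) * weight B (k + 2) - weight B k) := by
  rw [hB.mutB_apply_add_one_add_two k]
  linear_combination hB.sq_weight_eq k - hB.weight_mul hS k
    + hS.mul_mul_swap (k + 1) (k + 2) k

theorem mutB_mul_mutB :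
    mutB k B (k + 1) (k + 2) * mutB k B (k + 2) (k + 1) =
      -(weight B (k + 1) * weight B (k + 2) - weight B k) ^ 2 := by
  have h1 := hB.sq_weight_eq (k + 1)
  have h2 := hB.sq_weight_eq (k + 2)
  simp only [Fin3.add_one_add_one, Fin3.add_one_add_two, Fin3.add_two_add_one,
    Fin3.add_two_add_two] at h1 h2
  rw [hB.mutB_apply_add_one_add_two k, hB.mutB_apply_add_two_add_one k]
  linear_combination hB.sq_weight_eq k - 2 * hB.weight_mul hS k
    + hS.mul_mul_swap (k + 1) (k + 2) k + weight B (k + 2) ^ 2 * h1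
    - B (k + 2) k * B k (k + 2) * h2

theorem isPosCyclic_neg_mutB (hm : 0 < weight B (k + 1) * weight B (k + 2) - weight B k) :
    IsPosCyclic (-mutB k B) := by
  have hkk := (hB k).1
  have hk2 := hB (k + 2)
  rw [Fin3.add_two_add_one] at hk2
  have h12 : 0 < mutB k B (k + 1) (k + 2) := by
    have h := hB.mutB_mul_apply hS k
    have h21 : 0 < B (k + 2) (k + 1) := by simpa using (hB (k + 1)).2.2
    exact (pos_iff_pos_of_mul_pos (h ▸ mul_pos (hB.weight_pos k) hm)).2 h21
  have h21 : mutB k B (k + 2) (k + 1) < 0 :=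
    neg_of_mul_neg_right (hB.mutB_mul_mutB hS k ▸ neg_neg_of_pos (pow_pos hm 2)) h12.le
  intro i
  rcases Fin3.eq_or_eq_add_one_or_eq_add_two i k with rfl | rfl | rfl
  · simp [mutB_apply_left hkk, mutB_apply_right hkk, hkk, (hB i).2.1, (hB i).2.2]
  · simp [(hS.mutB k).apply_self_eq_zero, h12, h21]
  · simp [(hS.mutB k).apply_self_eq_zero, mutB_apply_left hkk, mutB_apply_right hkk, hk2.2.1,
      hk2.2.2]

theorem not_isCyclic3_mutB (hm : weight B (k + 1) * weight B (k + 2) - weight B k ≤ 0) :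
    ¬IsCyclic3 (mutB k B) := by
  have h12 : mutB k B (k + 1) (k + 2) ≤ 0 := by
    have h21 : 0 < B (k + 2) (k + 1) := by simpa using (hB (k + 1)).2.2
    refine nonpos_of_mul_nonpos_left ?_ h21
    rw [hB.mutB_mul_apply hS k]
    exact mul_nonpos_of_nonneg_of_nonpos (hB.weight_pos k).le hm
  rw [isCyclic3_iff]
  rintro (h | h)
  · have := (h k).2.1
    rw [mutB_apply_left (hB k).1] at this
    linarith [(hB k).2.1]
  · have := (h (k + 1)).2.1
    simp only [Matrix.neg_apply, Fin3.add_one_add_one] at this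
    linarith

theorem weight_mutB_self :
    weight (mutB k B) k = |weight B (k + 1) * weight B (k + 2) - weight B k| := by
  rw [weight, hB.mutB_mul_mutB hS k, abs_neg, abs_of_nonneg (sq_nonneg _), Real.sqrt_sq_eq_abs]

end IsPosCyclic

theorem IsCyclic3.weight_pos (hB : IsCyclic3 B) (k : Fin 3) : 0 < weight B k := by
  rcases isCyclic3_iff.1 hB with h | h
  · exact h.weight_pos k
  · simpa [weight_neg] using h.weight_pos k

namespace IsCyclic3

variable (hS : SkewSymmetrizable B) (hB : IsCyclic3 B) {k : Fin 3}
include hS hB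

theorem exists_isPosCyclic :
    ∃ C, IsPosCyclic C ∧ SkewSymmetrizable C ∧ (B = C ∨ B = -C) := by
  rcases isCyclic3_iff.1 hB with h | h
  · exact ⟨B, h, hS, Or.inl rfl⟩
  · exact ⟨-B, h, hS.neg, Or.inr (neg_neg B).symm⟩

theorem isCyclic3_mutB (hm : 0 < weight B (k + 1) * weight B (k + 2) - weight B k) :
    IsCyclic3 (mutB k B) := by
  obtain ⟨C, hC, hSC, rfl | rfl⟩ := exists_isPosCyclic hS hB
  · exact isCyclic3_iff.2 (Or.inr (hC.isPosCyclic_neg_mutB hSC k hm))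
  · simp only [weight_neg] at hm
    rw [mutB_neg (hC k).1, isCyclic3_neg_iff]
    exact isCyclic3_iff.2 (Or.inr (hC.isPosCyclic_neg_mutB hSC k hm))

theorem weight_mutB_self (hm : 0 ≤ weight B (k + 1) * weight B (k + 2) - weight B k) :
    weight (mutB k B) k = weight B (k + 1) * weight B (k + 2) - weight B k := by
  obtain ⟨C, hC, hSC, rfl | rfl⟩ := exists_isPosCyclic hS hB
  · rw [hC.weight_mutB_self hSC k, abs_of_nonneg hm]
  · simp only [weight_neg] at hm ⊢
    rw [mutB_neg (hC k).1, weight_neg, hC.weight_mutB_self hSC k, abs_of_nonneg hm]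

theorem not_isCyclic3_mutB (hm : weight B (k + 1) * weight B (k + 2) - weight B k ≤ 0) :
    ¬IsCyclic3 (mutB k B) := by
  obtain ⟨C, hC, hSC, rfl | rfl⟩ := exists_isPosCyclic hS hB
  · exact hC.not_isCyclic3_mutB hSC k hm
  · simp only [weight_neg] at hm
    rw [mutB_neg (hC k).1, isCyclic3_neg_iff]
    exact hC.not_isCyclic3_mutB hSC k hm

variable (hm : 0 < weight B (k + 1) * weight B (k + 2) - weight B k)
include hm

theorem sum_weight_mutB :
    ∑ i, weight (mutB k B) i =
      weight B (k + 1) * weight B (k + 2) - weight B k + weight B (k + 1) + weight B (k + 2) := by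
  rw [Fin3.sum_eq _ k, hB.weight_mutB_self hS hm.le,
    weight_mutB_of_ne (hS.apply_self_eq_zero k) (Fin3.add_one_ne_self k),
    weight_mutB_of_ne (hS.apply_self_eq_zero k) (Fin3.add_two_ne_self k)]

theorem markov_weight_mutB : markov (weight (mutB k B)) = markov (weight B) := by
  rw [markov_eq _ k, markov_eq _ k, hB.weight_mutB_self hS hm.le,
    weight_mutB_of_ne (hS.apply_self_eq_zero k) (Fin3.add_one_ne_self k),
    weight_mutB_of_ne (hS.apply_self_eq_zero k) (Fin3.add_two_ne_self k)]
  ring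

theorem exists_weight_mutB_lt
    (hlt : weight B (k + 1) * weight B (k + 2) - weight B k < weight B (k + 1) ∨
      weight B (k + 1) * weight B (k + 2) - weight B k < weight B (k + 2)) :
    ∃ j, weight (mutB k B) k < weight (mutB k B) j := by
  have hkk := hS.apply_self_eq_zero k
  rw [← hB.weight_mutB_self hS hm.le] at hlt
  rcases hlt with h | h
  · exact ⟨k + 1, by rwa [weight_mutB_of_ne hkk (Fin3.add_one_ne_self k)]⟩
  · exact ⟨k + 2, by rwa [weight_mutB_of_ne hkk (Fin3.add_two_ne_self k)]⟩

end IsCyclic3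

end Cyclic

theorem two_le_mul_sub_of_markov_le_four {p q r : ℝ} (hq : 2 ≤ q) (hr : 2 ≤ r)
    (h : p ^ 2 + q ^ 2 + r ^ 2 - p * q * r ≤ 4) : 2 ≤ q * r - p := by
  -- `p` and `q * r - p` are the roots of `x ^ 2 - q * r * x + q ^ 2 + r ^ 2 - markov`, which is
  -- `(q - r) ^ 2 + 4 - markov ≥ 0` at `x = 2`, and their sum `q * r` is at least `4`
  by_contra! h'
  nlinarith [mul_nonneg (sub_nonneg.2 hq) (sub_nonneg.2 hr), sq_nonneg (q - r)]

theorem vieta_descent_of_lt_two {p q r δ : ℝ} (hqp : q ≤ p) (hrp : r ≤ p) (hq : 0 < q)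
    (hδ : 0 < δ) (hsmall : q ≤ 2 - δ ∨ r ≤ 2 - δ) (hm : 0 < q * r - p) :
    3 < p + q + r ∧ q * r - p ≤ p - δ ∧ (q * r - p < q ∨ q * r - p < r) := by
  have hq1 : 1 < q := by nlinarith
  have hr1 : 1 < r := by nlinarith
  refine ⟨by linarith, ?_, ?_⟩ <;> rcases hsmall with h | h
  · nlinarith
  · nlinarith
  · exact Or.inr (by nlinarith)
  · exact Or.inl (by nlinarith)

theorem vieta_descent_of_four_lt_markov {p q r e : ℝ} (hqp : q ≤ p) (hrp : r ≤ p)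
    (hq : 2 ≤ q) (hr : 2 ≤ r) (he : 0 < e) (hM : p ^ 2 + q ^ 2 + r ^ 2 - p * q * r = 4 + e) :
    q * r - p ≤ p - 2 * √e ∧ (q * r - p < q ∨ q * r - p < r) := by
  -- `p` and `q * r - p` are the roots of `x ^ 2 - q * r * x + q ^ 2 + r ^ 2 - 4 - e`, which is
  -- negative at `x = max q r`; their squared difference is `(q ^ 2 - 4) * (r ^ 2 - 4) + 4 * e`
  have hlt : q * r - p < q ∨ q * r - p < r := by
    rcases le_total q r with h | h
    · refine Or.inr (lt_of_not_ge fun h' => ?_)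
      nlinarith [mul_nonneg (sub_nonneg.2 hq) (by nlinarith : (0 : ℝ) ≤ r ^ 2 - q - 2),
        mul_nonneg (sub_nonneg.2 hrp) (sub_nonneg.2 h')]
    · refine Or.inl (lt_of_not_ge fun h' => ?_)
      nlinarith [mul_nonneg (sub_nonneg.2 hr) (by nlinarith : (0 : ℝ) ≤ q ^ 2 - r - 2),
        mul_nonneg (sub_nonneg.2 hqp) (sub_nonneg.2 h')]
  have hpos : 0 ≤ p - (q * r - p) := by rcases hlt with h | h <;> linarith
  have hsq : (2 * √e) ^ 2 ≤ (p - (q * r - p)) ^ 2 := by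
    rw [mul_pow, Real.sq_sqrt he.le]
    nlinarith [mul_nonneg (by nlinarith : (0 : ℝ) ≤ q ^ 2 - 4)
      (by nlinarith : (0 : ℝ) ≤ r ^ 2 - 4)]
  exact ⟨by linarith [(pow_le_pow_iff_left₀ (by positivity) hpos two_ne_zero).1 hsq], hlt⟩

theorem foldl_CGstep_fst {n : ℕ} (B₀ : Matrix (Fin n) (Fin n) ℝ) (w : List (Fin n))
    (t : Matrix (Fin n) (Fin n) ℝ × Matrix (Fin n) (Fin n) ℝ × Matrix (Fin n) (Fin n) ℝ) :
    (w.foldl (CGstep B₀) t).1 = w.foldl (fun M k => mutB k M) t.1 := by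
  induction w generalizing t with
  | nil => rfl
  | cons k l ih => exact ih _

theorem Bmat_cons {n : ℕ} (B : Matrix (Fin n) (Fin n) ℝ) (k : Fin n) (l : List (Fin n)) :
    Bmat B (k :: l) = Bmat (mutB k B) l := by
  simp only [Bmat, CGmat, foldl_CGstep_fst]
  rfl

def Escapes (B : Mat3) (k : Fin 3) : Prop :=
  ∃ l, ReducedSeq (k :: l) ∧ ¬IsCyclic3 (Bmat B (k :: l))

section Descent

variable {B : Mat3} {k : Fin 3}

theorem Escapes.not_clusterCyclic (h : Escapes B k) : ¬ClusterCyclic B := by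
  obtain ⟨l, hl, hc⟩ := h
  exact fun hB => hc (hB _ hl)

theorem escapes_of_not_isCyclic3_mutB (h : ¬IsCyclic3 (mutB k B)) : Escapes B k :=
  ⟨[], List.isChain_singleton k, by rwa [Bmat_cons]⟩

theorem Escapes.of_mutB {k' : Fin 3} (h : Escapes (mutB k B) k') (hk : k ≠ k') : Escapes B k := by
  obtain ⟨l, hl, hc⟩ := h
  exact ⟨k' :: l, List.isChain_cons_cons.2 ⟨hk, hl⟩, by rwa [Bmat_cons]⟩

theorem escapes_of_descent (P : Mat3 → Prop) (S : Mat3 → ℝ) {γ : ℝ} (hγ : 0 < γ)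
    (step : ∀ B k, P B → (∀ j, weight B j ≤ weight B k) → Escapes B k ∨
      0 ≤ S B ∧ P (mutB k B) ∧ S (mutB k B) ≤ S B - γ ∧
        ∃ j, weight (mutB k B) k < weight (mutB k B) j)
    (hP : P B) (hk : ∀ j, weight B j ≤ weight B k) : Escapes B k := by
  obtain ⟨n, hn⟩ := exists_nat_gt (S B / γ)
  rw [div_lt_iff₀ hγ] at hn
  induction n generalizing B k with
  | zero =>
    rcases step B k hP hk with h | ⟨h, -⟩
    · exact h
    · simp only [CharP.cast_eq_zero, zero_mul] at hn
      linarith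
  | succ n ih =>
    rcases step B k hP hk with h | ⟨-, hP', hS', j, hj⟩
    · exact h
    obtain ⟨k', hk'⟩ := Finite.exists_max (weight (mutB k B))
    refine (ih hP' hk' (by push_cast at hn; linarith)).of_mutB ?_
    rintro rfl
    exact (hk' j).not_gt hj

theorem escapes_of_weight_lt_two (hS : SkewSymmetrizable B) (hB : IsCyclic3 B) {i : Fin 3}
    (hi : weight B i < 2) (hk : ∀ j, weight B j ≤ weight B k) : Escapes B k := by
  obtain ⟨δ, hδ, hi⟩ : ∃ δ, 0 < δ ∧ weight B i ≤ 2 - δ :=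
    ⟨2 - weight B i, by linarith, by linarith⟩
  refine escapes_of_descent
    (fun B => SkewSymmetrizable B ∧ IsCyclic3 B ∧ ∃ i, weight B i ≤ 2 - δ)
    (fun B => ∑ i, weight B i - 3) hδ ?_ ⟨hS, hB, i, hi⟩ hk
  rintro B k ⟨hS, hB, i, hi⟩ hk
  rcases le_or_gt (weight B (k + 1) * weight B (k + 2) - weight B k) 0 with hm | hm
  · exact Or.inl (escapes_of_not_isCyclic3_mutB (hB.not_isCyclic3_mutB hS hm))
  have hsmall : weight B (k + 1) ≤ 2 - δ ∨ weight B (k + 2) ≤ 2 - δ := by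
    rcases Fin3.eq_or_eq_add_one_or_eq_add_two i k with rfl | rfl | rfl
    · exact Or.inl ((hk _).trans hi)
    · exact Or.inl hi
    · exact Or.inr hi
  obtain ⟨h3, hdec, hlt⟩ :=
    vieta_descent_of_lt_two (hk _) (hk _) (hB.weight_pos _) hδ hsmall hm
  refine Or.inr ⟨by rw [Fin3.sum_eq _ k]; linarith, ⟨hS.mutB k, hB.isCyclic3_mutB hS hm, ?_⟩,
    by simp only [hB.sum_weight_mutB hS hm, Fin3.sum_eq _ k]; linarith,
    hB.exists_weight_mutB_lt hS hm hlt⟩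
  have hkk := hS.apply_self_eq_zero k
  rcases hsmall with h | h
  · exact ⟨k + 1, by rwa [weight_mutB_of_ne hkk (Fin3.add_one_ne_self k)]⟩
  · exact ⟨k + 2, by rwa [weight_mutB_of_ne hkk (Fin3.add_two_ne_self k)]⟩

theorem escapes_of_four_lt_markov (hS : SkewSymmetrizable B) (hB : IsCyclic3 B)
    (hge : ∀ i, 2 ≤ weight B i) (h4 : 4 < markov (weight B))
    (hk : ∀ j, weight B j ≤ weight B k) :
    Escapes B k := by
  obtain ⟨e, he, hM⟩ : ∃ e, 0 < e ∧ markov (weight B) = 4 + e :=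
    ⟨_, sub_pos.2 h4, by ring⟩
  refine escapes_of_descent
    (fun B => SkewSymmetrizable B ∧ IsCyclic3 B ∧ (∀ i, 2 ≤ weight B i) ∧
      markov (weight B) = 4 + e) (fun B => ∑ i, weight B i - 6) (by positivity : 0 < 2 * √e) ?_
    ⟨hS, hB, hge, hM⟩ hk
  rintro B k ⟨hS, hB, hge, hM⟩ hk
  rcases le_or_gt (weight B (k + 1) * weight B (k + 2) - weight B k) 0 with hm | hm
  · exact Or.inl (escapes_of_not_isCyclic3_mutB (hB.not_isCyclic3_mutB hS hm))
  obtain ⟨hdec, hlt⟩ := vieta_descent_of_four_lt_markov (hk _) (hk _) (hge _) (hge _) he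
    (by rw [← markov_eq, hM])
  have hlt' := hB.exists_weight_mutB_lt hS hm hlt
  have hwk := hB.weight_mutB_self hS hm.le
  by_cases h2 : 2 ≤ weight B (k + 1) * weight B (k + 2) - weight B k
  · refine Or.inr ⟨by rw [Fin3.sum_eq _ k]; linarith [hge k, hge (k + 1), hge (k + 2)],
      ⟨hS.mutB k, hB.isCyclic3_mutB hS hm, fun i => ?_,
        by rw [hB.markov_weight_mutB hS hm, hM]⟩,
      by simp only [hB.sum_weight_mutB hS hm, Fin3.sum_eq _ k]; linarith, hlt'⟩
    rcases eq_or_ne i k with rfl | hi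
    · rwa [hwk]
    · rw [weight_mutB_of_ne (hS.apply_self_eq_zero k) hi]
      exact hge i
  · obtain ⟨j, hj⟩ := hlt'
    obtain ⟨k', hk'⟩ := Finite.exists_max (weight (mutB k B))
    refine Or.inl ((escapes_of_weight_lt_two (hS.mutB k) (hB.isCyclic3_mutB hS hm) (i := k)
      (by rw [hwk]; linarith) hk').of_mutB ?_)
    rintro rfl
    exact (hk' j).not_gt hj

theorem isCyclic3_Bmat (hS : SkewSymmetrizable B) (hB : IsCyclic3 B) (hge : ∀ i, 2 ≤ weight B i)
    (h4 : markov (weight B) ≤ 4) (w : List (Fin 3)) : IsCyclic3 (Bmat B w) := by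
  induction w generalizing B with
  | nil => exact hB
  | cons k l ih =>
    have hm : 2 ≤ weight B (k + 1) * weight B (k + 2) - weight B k :=
      two_le_mul_sub_of_markov_le_four (hge _) (hge _) (by rwa [← markov_eq])
    rw [Bmat_cons]
    refine ih (hS.mutB k) (hB.isCyclic3_mutB hS (by linarith)) (fun i => ?_)
      (by rwa [hB.markov_weight_mutB hS (by linarith)])
    rcases eq_or_ne i k with rfl | hi
    · rwa [hB.weight_mutB_self hS (by linarith)]
    · rw [weight_mutB_of_ne (hS.apply_self_eq_zero k) hi]
      exact hge i

end Descent

theorem cluster_cyclic_iff (B : Mat3) (hskew : SkewSymmetrizable B) (hcyc : IsCyclic3 B) :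
    ClusterCyclic B ↔
      ((∀ i j, i ≠ j → 4 ≤ |B i j * B j i|) ∧
        |B 0 1 * B 1 0| + |B 1 2 * B 2 1| + |B 2 0 * B 0 2| - |B 0 1 * B 1 2 * B 2 0| ≤ 4) := by
  rw [four_le_abs_mul_iff_two_le_weight, ← hskew.markov_weight]
  obtain ⟨k, hk⟩ := Finite.exists_max (weight B)
  constructor
  · intro hCC
    have hge : ∀ i, 2 ≤ weight B i := fun i => not_lt.1 fun hi =>
      (escapes_of_weight_lt_two hskew hcyc hi hk).not_clusterCyclic hCC
    exact ⟨hge, not_lt.1 fun h4 =>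
      (escapes_of_four_lt_markov hskew hcyc hge h4 hk).not_clusterCyclic hCC⟩
  · rintro ⟨hge, h4⟩ w -
    exact isCyclic3_Bmat hskew hcyc hge h4 w
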